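/- The double zeta value ζ(4,1) equals 2ζ(5) − ζ(2)ζ(3). -/

import Mathlib

/-!
Two linear relations in weight 5 determine ζ(4,1): the stuffle relation
ζ(2)ζ(3) = ζ(2,3) + ζ(3,2) + ζ(5), obtained by splitting the product of the two series along the
diagonal, and the sum formula ζ(4,1) + ζ(3,2) + ζ(2,3) = ζ(5).

The sum formula holds in every weight k + 2 ≥ 4 and comes from evaluating the Mordell–Tornheim
sum T(k,1,1) = ∑ 1/(mᵏ n (m+n)) in two ways. Iterating the partial fraction
1/(mn) = (1/m + 1/n)/(m+n) expands it into ∑ⱼ ζ(j+2, k-j) + ζ(k+1, 1). Summing over n first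
instead, the telescoping series ∑ₙ 1/(n(m+n)) = Hₘ/m gives ∑ₘ Hₘ/mᵏ⁺¹ = ζ(k+1, 1) + ζ(k+2).
-/

noncomputable def zeta1 (k : ℕ) : ℝ := ∑' n : ℕ+, 1 / (n : ℝ) ^ k

noncomputable def zeta2 (a b : ℕ) : ℝ :=
  ∑' p : {p : ℕ × ℕ // p.2 < p.1 ∧ 0 < p.2},
    1 / ((p.val.1 : ℝ) ^ a * (p.val.2 : ℝ) ^ b)

open Finset Filter Topology

lemma hasSum_sub_succ {u : ℕ → ℝ} (hu : Antitone u) (hu0 : Tendsto u atTop (𝓝 0)) :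
    HasSum (fun n => u n - u (n + 1)) (u 0) := by
  rw [hasSum_iff_tendsto_nat_of_nonneg (fun n => sub_nonneg.2 (hu n.le_succ))]
  simp_rw [sum_range_sub']
  simpa using (tendsto_const_nhds (x := u 0)).sub hu0

lemma hasSum_sub_add {u : ℕ → ℝ} (hu : Antitone u) (hu0 : Tendsto u atTop (𝓝 0)) (m : ℕ) :
    HasSum (fun n => u n - u (n + m)) (∑ j ∈ range m, u j) := by
  have h : ∀ j ∈ range m, HasSum (fun n => u (n + j) - u (n + j + 1)) (u j) := fun j _ => by
    simpa [add_right_comm] using hasSum_sub_succ (u := fun n => u (n + j))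
      (hu.comp_monotone fun a b hab => by omega) ((tendsto_add_atTop_iff_nat j).2 hu0)
  convert hasSum_sum h using 1
  funext n
  simpa [add_assoc] using (sum_range_sub' (fun j => u (n + j)) m).symm

lemma hasSum_one_div_mul_add (m : ℕ+) :
    HasSum (fun n : ℕ+ => 1 / ((n : ℝ) * (m + n))) (harmonic m / m) := by
  have anti : Antitone fun n : ℕ => 1 / ((n : ℝ) + 1) := fun a b hab => by
    dsimp only
    gcongr
  have harm : (harmonic m : ℝ) = ∑ j ∈ range m, 1 / ((j : ℝ) + 1) := by simp [harmonic]
  have term : ∀ n : ℕ, 1 / (((n + 1 : ℕ) : ℝ) * (m + (n + 1 : ℕ)))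
      = (1 / ((n : ℝ) + 1) - 1 / (((n + m : ℕ) : ℝ) + 1)) / m := fun n => by
    push_cast
    field_simp
    ring
  rw [hasSum_pnat_iff_hasSum_succ (f := fun n : ℕ => 1 / ((n : ℝ) * (m + n))), funext term, harm]
  exact (hasSum_sub_add anti tendsto_one_div_add_atTop_nhds_zero_nat m).div_const _

lemma tsum_sigma_of_nonneg {α : Type*} {β : α → Type*} [∀ a, Finite (β a)]
    {f : (Σ a, β a) → ℝ} (hf : ∀ x, 0 ≤ f x) : ∑' x, f x = ∑' a, ∑' b, f ⟨a, b⟩ := by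
  by_cases h : Summable f
  · exact h.tsum_sigma
  · rw [tsum_eq_zero_of_not_summable h, tsum_eq_zero_of_not_summable]
    rwa [summable_sigma_of_nonneg hf, and_iff_right fun a => Summable.of_finite] at h

lemma summable_one_div_pnat_pow {k : ℕ} (hk : 2 ≤ k) : Summable fun n : ℕ+ => 1 / (n : ℝ) ^ k :=
  (Real.summable_one_div_nat_pow.2 hk).comp_injective PNat.coe_injective

lemma summable_one_div_nat_add_one_pow {k : ℕ} (hk : 2 ≤ k) :
    Summable fun n : ℕ => 1 / ((n : ℝ) + 1) ^ k := by
  simpa using (summable_nat_add_iff 1).2 (Real.summable_one_div_nat_pow.2 hk)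

lemma summable_one_div_pow_mul_one_div_pow {a b : ℕ} (ha : 2 ≤ a) (hb : 2 ≤ b) :
    Summable fun p : ℕ+ × ℕ+ => 1 / (p.1 : ℝ) ^ a * (1 / (p.2 : ℝ) ^ b) :=
  (summable_one_div_pnat_pow ha).mul_of_nonneg (summable_one_div_pnat_pow hb)
    (fun _ => by positivity) (fun _ => by positivity)

lemma summable_harmonic_div_pow {a : ℕ} (ha : 2 ≤ a) :
    Summable fun M : ℕ => (harmonic M : ℝ) / ((M : ℝ) + 1) ^ (a + 1) := by
  refine (summable_one_div_nat_add_one_pow ha).of_nonneg_of_le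
    (fun M => div_nonneg (by push_cast [harmonic]; positivity) (by positivity)) fun M => ?_
  have hH : (harmonic M : ℝ) ≤ M + 1 := (harmonic_le_one_add_log M).trans
    (by linarith [Real.log_le_self (Nat.cast_nonneg (α := ℝ) M)])
  calc (harmonic M : ℝ) / ((M : ℝ) + 1) ^ (a + 1)
      ≤ ((M : ℝ) + 1) / ((M : ℝ) + 1) ^ (a + 1) := by gcongr
    _ = 1 / ((M : ℝ) + 1) ^ a := by
      field_simp
      ring

lemma mem_range_add_left {p : ℕ+ × ℕ+} :
    p ∈ Set.range (fun q : ℕ+ × ℕ+ => (q.1 + q.2, q.2)) ↔ p.2 < p.1 := by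
  refine ⟨?_, fun h => ⟨(p.1 - p.2, p.2), Prod.ext (PNat.eq ?_) rfl⟩⟩
  · rintro ⟨q, rfl⟩
    simp [← PNat.coe_lt_coe]
  · simp [PNat.sub_coe, h]
    rw [← PNat.coe_lt_coe] at h
    omega

lemma mem_range_add_right {p : ℕ+ × ℕ+} :
    p ∈ Set.range (fun q : ℕ+ × ℕ+ => (q.2, q.1 + q.2)) ↔ p.1 < p.2 := by
  refine ⟨?_, fun h => ⟨(p.2 - p.1, p.1), Prod.ext rfl (PNat.eq ?_)⟩⟩
  · rintro ⟨q, rfl⟩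
    simp [← PNat.coe_lt_coe]
  · simp [PNat.sub_coe, h]
    rw [← PNat.coe_lt_coe] at h
    omega

lemma mem_range_diag {p : ℕ+ × ℕ+} : p ∈ Set.range (fun k : ℕ+ => (k, k)) ↔ p.1 = p.2 :=
  ⟨by rintro ⟨k, rfl⟩; rfl, fun h => ⟨p.1, Prod.ext rfl h⟩⟩

lemma Summable.tsum_pnat_prod_eq_triangles_add_diag {f : ℕ+ × ℕ+ → ℝ} (hf : Summable f) :
    ∑' p, f p = ∑' q : ℕ+ × ℕ+, f (q.1 + q.2, q.2) + ∑' q : ℕ+ × ℕ+, f (q.2, q.1 + q.2)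
      + ∑' k, f (k, k) := by
  have split : ∀ p, f p = (Set.range fun q : ℕ+ × ℕ+ => (q.1 + q.2, q.2)).indicator f p
      + (Set.range fun q : ℕ+ × ℕ+ => (q.2, q.1 + q.2)).indicator f p
      + (Set.range fun k : ℕ+ => (k, k)).indicator f p := fun p => by
    classical
    simp only [Set.indicator_apply, mem_range_add_left, mem_range_add_right, mem_range_diag]
    rcases lt_trichotomy p.1 p.2 with h | h | h
    · simp [h, h.not_gt, h.ne]
    · simp [h]
    · simp [h, h.not_gt, h.ne']
  have injL : (fun q : ℕ+ × ℕ+ => (q.1 + q.2, q.2)).Injective := fun q q' h => by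
    simp only [Prod.mk.injEq] at h
    exact Prod.ext (add_right_cancel (h.2 ▸ h.1)) h.2
  have injU : (fun q : ℕ+ × ℕ+ => (q.2, q.1 + q.2)).Injective := fun q q' h => by
    simp only [Prod.mk.injEq] at h
    exact Prod.ext (add_right_cancel (h.1 ▸ h.2)) h.1
  have injD : (fun k : ℕ+ => (k, k)).Injective := fun k k' h => congrArg Prod.fst h
  rw [tsum_congr split, (hf.indicator _ |>.add (hf.indicator _)).tsum_add (hf.indicator _),
    (hf.indicator _).tsum_add (hf.indicator _), ← _root_.tsum_subtype, ← _root_.tsum_subtype,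
    ← _root_.tsum_subtype, tsum_range _ injL, tsum_range _ injU, tsum_range _ injD]

abbrev Zeta2Index : Type := {p : ℕ × ℕ // p.2 < p.1 ∧ 0 < p.2}

def Zeta2Index.equivPNatProd : ℕ+ × ℕ+ ≃ Zeta2Index where
  toFun q := ⟨(q.1 + q.2, q.2), by have := q.1.pos; have := q.2.pos; omega⟩
  invFun p := (⟨p.1.1 - p.1.2, by have := p.2; omega⟩, ⟨p.1.2, p.2.2⟩)
  left_inv q := Prod.ext (PNat.eq (by simp)) rfl
  right_inv p := by ext <;> simp; have := p.2; omega

def Zeta2Index.equivSigmaFin : (Σ M : ℕ, Fin M) ≃ Zeta2Index where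
  toFun x := ⟨(x.1 + 1, x.2 + 1), by have := x.2.isLt; omega⟩
  invFun p := ⟨p.1.1 - 1, p.1.2 - 1, by have := p.2; omega⟩
  left_inv x := Sigma.ext rfl (heq_of_eq (Fin.ext (by simp)))
  right_inv p := by ext <;> simp <;> have := p.2 <;> omega

lemma zeta2_one_eq_tsum_harmonic (a : ℕ) :
    zeta2 a 1 = ∑' M : ℕ, (harmonic M : ℝ) / ((M : ℝ) + 1) ^ a := by
  rw [zeta2, ← Zeta2Index.equivSigmaFin.tsum_eq, tsum_sigma_of_nonneg fun x => by positivity]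
  congr 1
  funext M
  simp only [tsum_fintype, Zeta2Index.equivSigmaFin, Equiv.coe_fn_mk, pow_one]
  push_cast
  rw [Fin.sum_univ_eq_sum_range (fun j : ℕ => 1 / (((M : ℝ) + 1) ^ a * ((j : ℝ) + 1))) M]
  push_cast [harmonic, sum_div]
  refine sum_congr rfl fun j _ => ?_
  rw [one_div, mul_inv, div_eq_mul_inv, mul_comm]

lemma tsum_harmonic_div_pow {a : ℕ} (ha : 2 ≤ a) :
    ∑' m : ℕ+, (harmonic m : ℝ) / (m : ℝ) ^ (a + 1) = zeta2 (a + 1) 1 + zeta1 (a + 2) := by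
  have hs : Summable fun M : ℕ => 1 / ((M + 1 : ℕ) : ℝ) ^ (a + 2) := by
    simpa using summable_one_div_nat_add_one_pow (k := a + 2) (by omega)
  rw [tsum_pnat_eq_tsum_succ (f := fun m : ℕ => (harmonic m : ℝ) / (m : ℝ) ^ (a + 1)),
    zeta2_one_eq_tsum_harmonic, zeta1,
    tsum_pnat_eq_tsum_succ (f := fun n : ℕ => 1 / (n : ℝ) ^ (a + 2)),
    ← (summable_harmonic_div_pow ha).tsum_add hs]
  congr 1
  funext M
  push_cast [harmonic_succ]
  field_simp
  ring

noncomputable def tornheimTerm (a b c : ℕ) (p : ℕ+ × ℕ+) : ℝ :=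
  1 / ((p.1 : ℝ) ^ a * (p.2 : ℝ) ^ b * ((p.1 : ℝ) + p.2) ^ c)

noncomputable def tornheim (a b c : ℕ) : ℝ := ∑' p, tornheimTerm a b c p

lemma tornheimTerm_nonneg (a b c : ℕ) (p : ℕ+ × ℕ+) : 0 ≤ tornheimTerm a b c p := by
  unfold tornheimTerm
  positivity

lemma tornheim_comm (a b c : ℕ) : tornheim a b c = tornheim b a c := by
  rw [tornheim, ← (Equiv.prodComm ℕ+ ℕ+).tsum_eq]
  congr 1
  funext p
  simp only [tornheimTerm, Equiv.prodComm_apply, Prod.fst_swap, Prod.snd_swap]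
  ring_nf

lemma zeta2_eq_tornheim (a b : ℕ) : zeta2 a b = tornheim 0 b a := by
  rw [zeta2, ← Zeta2Index.equivPNatProd.tsum_eq]
  congr 1
  funext q
  simp [Zeta2Index.equivPNatProd, tornheimTerm, mul_comm]

theorem zeta1_mul_zeta1 {a b : ℕ} (ha : 2 ≤ a) (hb : 2 ≤ b) :
    zeta1 a * zeta1 b = zeta2 a b + zeta2 b a + zeta1 (a + b) := by
  have hf := summable_one_div_pow_mul_one_div_pow ha hb
  rw [zeta1, zeta1, Summable.tsum_mul_tsum (summable_one_div_pnat_pow ha)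
    (summable_one_div_pnat_pow hb) hf, hf.tsum_pnat_prod_eq_triangles_add_diag,
    zeta2_eq_tornheim, zeta2_eq_tornheim, zeta1, tornheim, tornheim]
  refine congrArg₂ (· + ·) (congrArg₂ (· + ·) (tsum_congr fun q => ?_) (tsum_congr fun q => ?_))
    (tsum_congr fun k => ?_) <;> simp [tornheimTerm, pow_add, mul_comm]

/-- The partial fraction `1/(mn) = (1/m + 1/n)/(m+n)`. -/
lemma tornheimTerm_succ_succ (a b c : ℕ) (p : ℕ+ × ℕ+) :
    tornheimTerm (a + 1) (b + 1) c p
      = tornheimTerm a (b + 1) (c + 1) p + tornheimTerm (a + 1) b (c + 1) p := by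
  unfold tornheimTerm
  field_simp
  ring

lemma summable_tornheimTerm_of_succ_succ {a b c : ℕ}
    (h : Summable (tornheimTerm (a + 1) (b + 1) c)) :
    Summable (tornheimTerm a (b + 1) (c + 1)) ∧ Summable (tornheimTerm (a + 1) b (c + 1)) := by
  refine ⟨h.of_nonneg_of_le (tornheimTerm_nonneg _ _ _) fun p => ?_,
    h.of_nonneg_of_le (tornheimTerm_nonneg _ _ _) fun p => ?_⟩ <;>
  rw [tornheimTerm_succ_succ]
  · exact le_add_of_nonneg_right (tornheimTerm_nonneg _ _ _ _)
  · exact le_add_of_nonneg_left (tornheimTerm_nonneg _ _ _ _)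

lemma tornheim_succ_succ {a b c : ℕ} (h : Summable (tornheimTerm (a + 1) (b + 1) c)) :
    tornheim (a + 1) (b + 1) c = tornheim a (b + 1) (c + 1) + tornheim (a + 1) b (c + 1) := by
  obtain ⟨h₁, h₂⟩ := summable_tornheimTerm_of_succ_succ h
  rw [tornheim, tsum_congr (tornheimTerm_succ_succ a b c), h₁.tsum_add h₂, tornheim, tornheim]

lemma tornheim_one_eq_sum_zeta2 (a c : ℕ) (h : Summable (tornheimTerm a 1 c)) :
    tornheim a 1 c = ∑ j ∈ range a, zeta2 (j + 1 + c) (a - j) + zeta2 (a + c) 1 := by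
  induction a generalizing c with
  | zero => simp [zeta2_eq_tornheim]
  | succ a ih =>
    rw [tornheim_succ_succ h, ih (c + 1) (summable_tornheimTerm_of_succ_succ h).1, tornheim_comm,
      ← zeta2_eq_tornheim, sum_range_succ']
    have shift : ∀ j, j + 1 + (c + 1) = j + 1 + 1 + c := fun j => by omega
    simp only [Nat.add_sub_add_right, Nat.sub_zero, zero_add, shift, add_comm 1 c, ← add_assoc,
      Nat.add_right_comm a 1 c]
    ring

lemma summable_tornheimTerm_one_one {k : ℕ} (hk : 2 ≤ k) : Summable (tornheimTerm k 1 1) := by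
  refine (summable_one_div_pow_mul_one_div_pow hk le_rfl).of_nonneg_of_le
    (tornheimTerm_nonneg _ _ _) fun p => ?_
  rw [tornheimTerm, one_div_mul_one_div]
  apply one_div_le_one_div_of_le (by positivity)
  calc (p.1 : ℝ) ^ k * (p.2 : ℝ) ^ 2 = (p.1 : ℝ) ^ k * (p.2 : ℝ) ^ 1 * (p.2 : ℝ) ^ 1 := by ring
    _ ≤ (p.1 : ℝ) ^ k * (p.2 : ℝ) ^ 1 * ((p.1 : ℝ) + p.2) ^ 1 := by
      gcongr
      exact le_add_of_nonneg_left (by positivity)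

lemma tornheim_one_one {k : ℕ} (hk : 2 ≤ k) :
    tornheim k 1 1 = zeta2 (k + 1) 1 + zeta1 (k + 2) := by
  have hs := summable_tornheimTerm_one_one hk
  have row : ∀ m : ℕ+, ∑' n, tornheimTerm k 1 1 (m, n) = harmonic m / (m : ℝ) ^ (k + 1) := by
    intro m
    have term : ∀ n : ℕ+,
        tornheimTerm k 1 1 (m, n) = 1 / (m : ℝ) ^ k * (1 / ((n : ℝ) * (m + n))) := fun n => by
      simp only [tornheimTerm, pow_one, one_div_mul_one_div, mul_assoc]
    rw [tsum_congr term, tsum_mul_left, (hasSum_one_div_mul_add m).tsum_eq]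
    field_simp
    ring
  rw [tornheim, hs.tsum_prod' hs.prod_factor, tsum_congr row, tsum_harmonic_div_pow hk]

theorem sum_zeta2_eq_zeta1 {k : ℕ} (hk : 2 ≤ k) :
    ∑ j ∈ range k, zeta2 (j + 2) (k - j) = zeta1 (k + 2) := by
  have h := tornheim_one_eq_sum_zeta2 k 1 (summable_tornheimTerm_one_one hk)
  rw [tornheim_one_one hk] at h
  linarith

theorem zeta_four_one :
    zeta2 4 1 = 2 * zeta1 5 - zeta1 2 * zeta1 3 := by
  have stuffle := zeta1_mul_zeta1 (a := 2) (b := 3) le_rfl (by norm_num)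
  have sum_formula := sum_zeta2_eq_zeta1 (k := 3) (by norm_num)
  simp only [sum_range_succ, sum_range_zero] at sum_formula
  norm_num at stuffle sum_formula
  linarith
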